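/- arXiv:2502.16743 — 4 statements merged into one kernel-verified Lean document; each statement's English description precedes it below -/
import Mathlib

section
/- For all natural numbers k and l and all natural numbers m and n, if m ≡ n (mod 2^(k+l)) then T^[l](m) ≡ T^[l](n) (mod 2^k). That is, the residue of the l-th Collatz iterate modulo 2^k depends only on the residue of the starting value modulo 2^(k+l). -/
/-- The Collatz T-function: T(n) = n/2 if n is even, (3n+1)/2 if n is odd. -/
def collatzT (n : ℕ) : ℕ := if n % 2 = 0 then n / 2 else (3 * n + 1) / 2

lemma collatzT_step_mod (k m n : ℕ) (h : m % 2 ^ (k + 1) = n % 2 ^ (k + 1)) :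
    collatzT m % 2 ^ k = collatzT n % 2 ^ k := by
  set q := 2 ^ k with hq
  have h2 : (2 : ℕ) ^ (k + 1) = 2 * q := by rw [pow_succ]; ring
  rw [h2] at h
  have hm := Nat.div_add_mod m (2 * q)
  have hn := Nat.div_add_mod n (2 * q)
  set a := m / (2 * q) with ha
  set b := n / (2 * q) with hb
  set r := m % (2 * q) with hr
  rw [← h] at hn
  have hm' : m = 2 * (q * a) + r := by rw [← hm]; ring
  have hn' : n = 2 * (q * b) + r := by rw [← hn]; ring
  have hca : ∃ c, c = q * a := ⟨q * a, rfl⟩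
  obtain ⟨c, hc⟩ := hca
  obtain ⟨d, hd⟩ : ∃ d, d = q * b := ⟨q * b, rfl⟩
  rw [← hc] at hm'
  rw [← hd] at hn'
  have hmp : m % 2 = r % 2 := by omega
  have hnp : n % 2 = r % 2 := by omega
  unfold collatzT
  rcases Nat.even_or_odd r with ⟨s, hs⟩ | ⟨s, hs⟩
  · have h0 : r % 2 = 0 := by omega
    rw [hmp, hnp, h0]
    simp only [if_true]
    have hm2 : m / 2 = c + s := by omega
    have hn2 : n / 2 = d + s := by omega
    rw [hm2, hn2, hc, hd, Nat.mul_add_mod, Nat.mul_add_mod]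
  · have h1 : r % 2 = 1 := by omega
    rw [hmp, hnp, h1]
    simp only [if_false, Nat.one_ne_zero]
    have hm2 : (3 * m + 1) / 2 = 3 * c + (3 * s + 2) := by omega
    have hn2 : (3 * n + 1) / 2 = 3 * d + (3 * s + 2) := by omega
    rw [hm2, hn2, hc, hd]
    have e1 : 3 * (q * a) = q * (3 * a) := by ring
    have e2 : 3 * (q * b) = q * (3 * b) := by ring
    rw [e1, e2, Nat.mul_add_mod, Nat.mul_add_mod]

theorem collatz_iterate_mod (k l m n : ℕ)
    (h : m % 2 ^ (k + l) = n % 2 ^ (k + l)) :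
    collatzT^[l] m % 2 ^ k = collatzT^[l] n % 2 ^ k := by
  induction l generalizing m n with
  | zero => simpa using h
  | succ l ih =>
    rw [Function.iterate_succ_apply, Function.iterate_succ_apply]
    apply ih
    apply collatzT_step_mod
    have : k + l + 1 = k + (l + 1) := by ring
    rw [this]
    exact h
end

section
/- Composition formula for Collatz polynomials: let k, l be natural numbers, let r be a residue with 0 ≤ r < 2^(k+l), and set r₀ = r mod 2^l. Suppose a₂, b₂ are natural numbers with 2^l · T^[l](n) = a₂·n + b₂ for all n ≡ r₀ (mod 2^l), and set s = T^[l](r) mod 2^k. Suppose a₁, b₁ are natural numbers with 2^k · T^[k](m) = a₁·m + b₁ for all m ≡ s (mod 2^k). Then for every natural number n with n ≡ r (mod 2^(k+l)), one has 2^(k+l) · T^[k+l](n) = a₁·a₂·n + (a₁·b₂ + 2^l·b₁). -/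
theorem collatz_polynomial_composition (k l r : ℕ) (hr : r < 2 ^ (k + l))
    (a₂ b₂ : ℕ)
    (h₂ : ∀ n : ℕ, n % 2 ^ l = r % 2 ^ l → 2 ^ l * collatzT^[l] n = a₂ * n + b₂)
    (a₁ b₁ : ℕ)
    (h₁ : ∀ m : ℕ, m % 2 ^ k = collatzT^[l] r % 2 ^ k →
      2 ^ k * collatzT^[k] m = a₁ * m + b₁) :
    ∀ n : ℕ, n % 2 ^ (k + l) = r % 2 ^ (k + l) →
      2 ^ (k + l) * collatzT^[k + l] n = a₁ * a₂ * n + (a₁ * b₂ + 2 ^ l * b₁) := by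
  intro n hn
  have hln : n % 2 ^ l = r % 2 ^ l := by
    have hdvd : (2:ℕ) ^ l ∣ 2 ^ (k + l) := pow_dvd_pow 2 (Nat.le_add_left l k)
    calc n % 2 ^ l = n % 2 ^ (k + l) % 2 ^ l := (Nat.mod_mod_of_dvd n hdvd).symm
      _ = r % 2 ^ (k + l) % 2 ^ l := by rw [hn]
      _ = r % 2 ^ l := Nat.mod_mod_of_dvd r hdvd
  have hn2 := h₂ n hln
  have hr2 := h₂ r rfl
  -- show T^[l] n ≡ T^[l] r mod 2^k
  have hmod : (collatzT^[l] n) % 2 ^ k = (collatzT^[l] r) % 2 ^ k := by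
    have hd : ((2:ℕ) ^ (k + l) : ℤ) ∣ (r : ℤ) - (n : ℤ) :=
      by exact_mod_cast (Nat.modEq_iff_dvd).mp hn
    have key : ((2:ℤ)^l) * ((collatzT^[l] r : ℤ) - (collatzT^[l] n : ℤ))
        = (a₂ : ℤ) * ((r : ℤ) - (n : ℤ)) := by
      have h1 : ((2:ℕ)^l : ℤ) * (collatzT^[l] n : ℤ) = (a₂:ℤ) * n + b₂ := by
        exact_mod_cast congrArg (Nat.cast : ℕ → ℤ) hn2
      have h2 : ((2:ℕ)^l : ℤ) * (collatzT^[l] r : ℤ) = (a₂:ℤ) * r + b₂ := by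
        exact_mod_cast congrArg (Nat.cast : ℕ → ℤ) hr2
      push_cast at h1 h2 ⊢
      linarith
    have hd2 : ((2:ℤ)^(k+l)) ∣ ((2:ℤ)^l) * ((collatzT^[l] r : ℤ) - (collatzT^[l] n : ℤ)) := by
      rw [key]
      exact Dvd.dvd.mul_left (by exact_mod_cast hd) _
    have hd3 : ((2:ℤ)^k) ∣ ((collatzT^[l] r : ℤ) - (collatzT^[l] n : ℤ)) := by
      have hpow : ((2:ℤ)^(k+l)) = (2:ℤ)^l * 2^k := by ring
      rw [hpow] at hd2
      exact (mul_dvd_mul_iff_left (by positivity : ((2:ℤ)^l) ≠ 0)).mp hd2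
    have : (collatzT^[l] n) ≡ (collatzT^[l] r) [MOD 2 ^ k] :=
      (Nat.modEq_iff_dvd).mpr (by exact_mod_cast hd3)
    exact this
  have hn1 := h₁ (collatzT^[l] n) hmod
  have hiter : collatzT^[k + l] n = collatzT^[k] (collatzT^[l] n) :=
    Function.iterate_add_apply collatzT k l n
  calc 2 ^ (k + l) * collatzT^[k + l] n
      = 2 ^ l * (2 ^ k * collatzT^[k] (collatzT^[l] n)) := by
        rw [hiter, pow_add]; ring
    _ = 2 ^ l * (a₁ * collatzT^[l] n + b₁) := by rw [hn1]
    _ = a₁ * (2 ^ l * collatzT^[l] n) + 2 ^ l * b₁ := by ring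
    _ = a₁ * (a₂ * n + b₂) + 2 ^ l * b₁ := by rw [hn2]
    _ = a₁ * a₂ * n + (a₁ * b₂ + 2 ^ l * b₁) := by ring
end

section
/- The number of remaining residue classes modulo 2^7 = 128 for 7 iterations, i.e., the cardinality of {r : 0 ≤ r < 128 and for all natural numbers n ≡ r (mod 128) and all j with 1 ≤ j ≤ 7, T^[j](n) ≥ n}, is exactly 13. -/
/-- Product of 3's picked up at odd steps. -/
def collatzW (r : ℕ) : ℕ → ℕ
  | 0 => 1
  | j + 1 => collatzW r j * (if collatzT^[j] r % 2 = 0 then 1 else 3)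

lemma collatz_key (r : ℕ) : ∀ j ≤ 7, ∀ q : ℕ,
    collatzT^[j] (128 * q + r) = 2 ^ (7 - j) * collatzW r j * q + collatzT^[j] r := by
  intro j
  induction j with
  | zero => intro _ q; simp [collatzW]
  | succ j ih =>
    intro hj q
    have hj7 : j ≤ 7 := by omega
    have h6 : 7 - j = (6 - j) + 1 := by omega
    have h7 : 7 - (j + 1) = 6 - j := by omega
    rw [Function.iterate_succ_apply', Function.iterate_succ_apply', ih hj7 q]
    set t := collatzT^[j] r with ht
    set A := 2 ^ (6 - j) * collatzW r j with hA
    have hexp : 2 ^ (7 - j) * collatzW r j = 2 * A := by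
      rw [h6, pow_succ, hA]; ring
    rw [hexp, h7]
    unfold collatzT collatzW
    have hm : (2 * A * q + t) % 2 = t % 2 := by
      have e : 2 * A * q = 2 * (A * q) := by ring
      rw [e]; omega
    rcases Nat.even_or_odd t with he | ho
    · have h2 : t % 2 = 0 := Nat.even_iff.mp he
      rw [hm, h2]
      have e : 2 * A * q = 2 * (A * q) := by ring
      have e2 : 2 ^ (6 - j) * (collatzW r j * 1) * q = A * q := by rw [hA]; ring
      simp only [if_true]
      rw [e, e2]
      omega
    · have h2 : t % 2 = 1 := Nat.odd_iff.mp ho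
      have h2' : ¬ (t % 2 = 0) := by omega
      rw [hm, h2]
      have e1 : 3 * (2 * A * q + t) + 1 = 2 * (3 * (A * q)) + (3 * t + 1) := by ring
      have e2 : 2 ^ (6 - j) * (collatzW r j * 3) * q = 3 * (A * q) := by rw [hA]; ring
      simp only [if_neg (one_ne_zero)]
      rw [e1, e2]
      omega

theorem collatz_remaining_classes_count_mod_128 :
    {r : ℕ | r < 128 ∧ ∀ n : ℕ, n % 128 = r → ∀ j : ℕ, 1 ≤ j → j ≤ 7 →
      n ≤ collatzT^[j] n}.ncard = 13 := by
  have hset : {r : ℕ | r < 128 ∧ ∀ n : ℕ, n % 128 = r → ∀ j : ℕ, 1 ≤ j → j ≤ 7 →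
      n ≤ collatzT^[j] n} = ↑((Finset.range 128).filter (fun r =>
        ∀ j ∈ Finset.Icc 1 7, 128 ≤ 2 ^ (7 - j) * collatzW r j ∧ r ≤ collatzT^[j] r)) := by
    ext r
    simp only [Set.mem_setOf_eq, Finset.coe_filter, Finset.mem_range, Finset.mem_Icc,
      Set.mem_setOf_eq]
    constructor
    · rintro ⟨hr, h⟩
      refine ⟨hr, fun j hj => ?_⟩
      have ht : r ≤ collatzT^[j] r := h r (Nat.mod_eq_of_lt hr) j hj.1 hj.2
      refine ⟨?_, ht⟩
      by_contra hw
      push_neg at hw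
      set q := collatzT^[j] r + 1 with hq
      have hmod : (128 * q + r) % 128 = r := by
        have : (128 * q + r) % 128 = r % 128 := Nat.mul_add_mod 128 q r
        rw [this]; exact Nat.mod_eq_of_lt hr
      have hn := h (128 * q + r) hmod j hj.1 hj.2
      rw [collatz_key r j hj.2 q] at hn
      have hle : 2 ^ (7 - j) * collatzW r j * q ≤ 127 * q :=
        Nat.mul_le_mul_right q (by omega)
      omega
    · rintro ⟨hr, h⟩
      refine ⟨hr, fun n hn j hj1 hj7 => ?_⟩
      obtain ⟨hw, ht⟩ := h j ⟨hj1, hj7⟩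
      have hne : n = 128 * (n / 128) + r := by omega
      rw [hne, collatz_key r j hj7 (n / 128)]
      have h1 : 128 * (n / 128) ≤ 2 ^ (7 - j) * collatzW r j * (n / 128) :=
        Nat.mul_le_mul_right _ hw
      omega
  rw [hset, Set.ncard_coe_finset]
  decide
end

section
/- The number of remaining residue classes modulo 2^9 = 512 for 9 iterations, i.e., the cardinality of {r : 0 ≤ r < 512 and for all natural numbers n ≡ r (mod 512) and all j with 1 ≤ j ≤ 9, T^[j](n) ≥ n}, is exactly 38. -/
set_option maxRecDepth 100000

lemma stepT (a p : ℕ) : collatzT (a + 2*p) = collatzT a + (if a % 2 = 0 then p else 3*p) := by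
  have h2 : (a + 2*p) % 2 = a % 2 := by omega
  unfold collatzT
  rw [h2]
  by_cases h : a % 2 = 0 <;> simp [h] <;> omega

lemma iterT (j : ℕ) (hj : j ≤ 9) (r : ℕ) :
    ∃ e, ∀ m, collatzT^[j] (r + 512*m) = collatzT^[j] r + e * 2^(9-j) * m := by
  induction j with
  | zero => exact ⟨1, fun m => by norm_num⟩
  | succ j ih =>
    obtain ⟨e, he⟩ := ih (by omega)
    refine ⟨if (collatzT^[j] r) % 2 = 0 then e else 3*e, fun m => ?_⟩
    rw [Function.iterate_succ_apply', Function.iterate_succ_apply', he m]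
    have h2 : e * 2^(9-j) * m = 2 * (e * 2^(9-(j+1)) * m) := by
      have h3 : 9 - j = (9 - (j+1)) + 1 := by omega
      rw [h3, pow_succ]; ring
    rw [h2, stepT]
    split <;> ring

def goodR (r : ℕ) : Bool :=
  (List.range 9).all fun j =>
    decide (r ≤ collatzT^[j+1] r) && decide (collatzT^[j+1] r + 512 ≤ collatzT^[j+1] (r+512))

lemma goodR_iff (r : ℕ) : goodR r = true ↔
    ∀ j < 9, r ≤ collatzT^[j+1] r ∧ collatzT^[j+1] r + 512 ≤ collatzT^[j+1] (r+512) := by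
  simp [goodR, List.all_eq_true, List.mem_range]
  exact forall_congr' fun x => imp_congr_right fun _ => and_congr decide_eq_true_iff decide_eq_true_iff

theorem collatz_remaining_classes_count_mod_512 :
    {r : ℕ | r < 512 ∧ ∀ n : ℕ, n % 512 = r → ∀ j : ℕ, 1 ≤ j → j ≤ 9 →
      n ≤ collatzT^[j] n}.ncard = 38 := by
  have hset : {r : ℕ | r < 512 ∧ ∀ n : ℕ, n % 512 = r → ∀ j : ℕ, 1 ≤ j → j ≤ 9 →
      n ≤ collatzT^[j] n} = ↑((Finset.range 512).filter (fun r => goodR r = true)) := by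
    ext r
    simp only [Set.mem_setOf_eq, Finset.coe_filter, Finset.mem_range, goodR_iff]
    constructor
    · rintro ⟨hr, h⟩
      refine ⟨hr, fun i hi => ?_⟩
      set j := i + 1 with hjdef
      have hj1 : 1 ≤ j := by omega
      have hj9 : j ≤ 9 := by omega
      obtain ⟨e, he⟩ := iterT j hj9 r
      have h0 : r ≤ collatzT^[j] r := h r (Nat.mod_eq_of_lt hr) j hj1 hj9
      refine ⟨h0, ?_⟩
      have he1 : collatzT^[j] (r + 512) = collatzT^[j] r + e * 2^(9-j) := by
        have := he 1; simpa using this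
      rw [he1]
      -- suffices to show 512 ≤ e * 2^(9-j)
      by_contra hcon
      have hD : e * 2^(9-j) ≤ 511 := by omega
      set t := collatzT^[j] r with ht
      have hm := h (r + 512*(t+1)) (by omega) j hj1 hj9
      rw [he (t+1)] at hm
      have : e * 2^(9-j) * (t+1) ≤ 511 * (t+1) := Nat.mul_le_mul_right _ hD
      omega
    · rintro ⟨hr, h⟩
      refine ⟨hr, fun n hn j hj1 hj9 => ?_⟩
      obtain ⟨e, he⟩ := iterT j hj9 r
      obtain ⟨h0, h1⟩ : r ≤ collatzT^[j] r ∧ collatzT^[j] r + 512 ≤ collatzT^[j] (r+512) := by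
        have := h (j-1) (by omega)
        have hj : j - 1 + 1 = j := by omega
        rwa [hj] at this
      have he1 : collatzT^[j] (r + 512) = collatzT^[j] r + e * 2^(9-j) := by
        have := he 1; simpa using this
      have hD : 512 ≤ e * 2^(9-j) := by omega
      have hnn : n = r + 512 * (n / 512) := by omega
      rw [hnn, he (n/512)]
      have : 512 * (n/512) ≤ e * 2^(9-j) * (n/512) := Nat.mul_le_mul_right _ hD
      omega
  rw [hset, Set.ncard_coe_finset]
  rfl
end
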